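/- arXiv:2504.14415 — 3 statements merged into one kernel-verified Lean document; each statement's English description precedes it below -/
import Mathlib

section
/- With notation as above (H symplectic of rank 2g, Y Lagrangian spanned by β_i, δ = I + q unipotent with q(H) ⊆ Y, q(Y) = 0, and the induced map on Λ³H), if Q = q restricted to X = span(α_i) viewed as a map X → Y is invertible over ℝ, then the map (δ−I)⁻¹ on the relevant graded quotients is given by (δ−I)⁻¹(h∧y_1∧y_2) = ½(h∧Q⁻¹(y_1)∧y_2 + h∧y_1∧Q⁻¹(y_2) − Q(h)∧Q⁻¹(y_1)∧Q⁻¹(y_2)), i.e., applying (δ−I) to the right-hand side returns h∧y_1∧y_2 modulo Λ³Y. -/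
open ExteriorAlgebra

/-- Let `V = X ⊕ Y` be a real vector space (the realification `H ⊗ ℝ`
of a symplectic lattice with `X` spanned by the `α_i` and `Y` Lagrangian), and let
`q : V → V` vanish on `Y`, take values in `Y`, and restrict to an isomorphism
`Q : X ≃ Y`.  Then `(δ−I)⁻¹` on the relevant graded quotients is given by
`(δ−I)⁻¹(h∧y₁∧y₂) = ½(h∧Q⁻¹(y₁)∧y₂ + h∧y₁∧Q⁻¹(y₂) − Q(h)∧Q⁻¹(y₁)∧Q⁻¹(y₂))`:
applying the operator induced by `δ − I` (with `δ = I + q`) to the right-hand side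
returns `h∧y₁∧y₂` modulo `Λ³Y`. -/
theorem stmt9 (V : Type*) [AddCommGroup V] [Module ℝ V]
    (X Y : Submodule ℝ V) (hcompl : IsCompl X Y)
    (q : V →ₗ[ℝ] V)
    (hqY : ∀ v : V, q v ∈ Y) (hq0 : ∀ y ∈ Y, q y = 0)
    (hQbij : ∀ y ∈ Y, ∃! x, x ∈ X ∧ q x = y)  -- q restricts to an isomorphism X ≃ Y
    (δ : V →ₗ[ℝ] V) (hδ : δ = LinearMap.id + q)
    (W6 : Submodule ℝ (ExteriorAlgebra ℝ V))
    (hW6 : W6 = Submodule.span ℝ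
      {z | ∃ y₁ ∈ Y, ∃ y₂ ∈ Y, ∃ y₃ ∈ Y, z = ι ℝ y₁ * ι ℝ y₂ * ι ℝ y₃})
    (h : V) (y₁ y₂ : V) (hy₁ : y₁ ∈ Y) (hy₂ : y₂ ∈ Y)
    (a b : V) (ha : a ∈ X) (hb : b ∈ X)
    (hqa : q a = y₁) (hqb : q b = y₂)  -- a = Q⁻¹(y₁), b = Q⁻¹(y₂)
    (z : ExteriorAlgebra ℝ V)
    (hz : z = (2⁻¹ : ℝ) • (ι ℝ h * ι ℝ a * ι ℝ y₂ + ι ℝ h * ι ℝ y₁ * ι ℝ b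
        - ι ℝ (q h) * ι ℝ a * ι ℝ b)) :
    map δ z - z - ι ℝ h * ι ℝ y₁ * ι ℝ y₂ ∈ W6 := by
  have key : map δ z - z - ι ℝ h * ι ℝ y₁ * ι ℝ y₂
      = (2⁻¹ : ℝ) • (ι ℝ (q h) * ι ℝ y₁ * ι ℝ y₂) := by
    subst hz hδ
    simp only [map_smul, map_sub, map_add, map_mul, ExteriorAlgebra.map_apply_ι,
      LinearMap.add_apply, LinearMap.id_apply, LinearMap.map_add, hqa, hqb,
      hq0 y₁ hy₁, hq0 y₂ hy₂, hq0 (q h) (hqY h), LinearMap.map_zero, map_zero, add_zero]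
    rw [show (ι ℝ) h * (ι ℝ) y₁ * (ι ℝ) y₂
        = (2⁻¹:ℝ) • ((2:ℝ) • ((ι ℝ) h * (ι ℝ) y₁ * (ι ℝ) y₂)) by
      rw [smul_smul]; norm_num]
    rw [← smul_sub, ← smul_sub]
    congr 1
    rw [two_smul]
    noncomm_ring
  rw [key, hW6]
  exact Submodule.smul_mem _ _ (Submodule.subset_span
    ⟨q h, hqY h, y₁, hy₁, y₂, hy₂, rfl⟩)
end

section
/- Let G = (V,E) be a finite connected graph with no separating edges, with fixed edge orientations, T = (V,F) a spanning tree. For ε ∈ F^c let u_ε denote the ε-th dual basis vector, and for e ∈ F define u_e = Σ_{ε: s(ε)∈S_2, t(ε)∈S_1} u_ε − Σ_{ε: s(ε)∈S_1, t(ε)∈S_2} u_ε, where S_1, S_2 are the components of T∖e containing s(e), t(e) respectively. Then for every vertex v ∈ V, the balancing identity Σ_{e∈E: s(e)=v} u_e − Σ_{e∈E: t(e)=v} u_e = 0 holds in ℝ^{F^c}. -/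
/-- Let `G = (V,E)` be a finite connected graph with no separating
edges, fixed edge orientations (source `s`, target `t`), and spanning tree
`T = (V,F)`.  For a tree edge `e ∈ F`, removing `e` from `T` splits `V` into two
components `S₁ ∋ s(e)` and `S₂ ∋ t(e)` (recorded by `χ e v = true` iff `v ∈ S₂`;
tree edges other than `e` do not cross the cut, and for every cotree edge `ε` there
is a tree path `z ε` supported on `F` from `t(ε)` to `s(ε)`).  Define
`u_e = ∑_{ε : s(ε)∈S₂, t(ε)∈S₁} u_ε − ∑_{ε : s(ε)∈S₁, t(ε)∈S₂} u_ε ∈ ℝ^{F^c}`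
for `e ∈ F`, where `{u_ε : ε ∈ F^c}` is the standard basis.  Then for every vertex
`v` the balancing identity `∑_{e : s(e)=v} u_e − ∑_{e : t(e)=v} u_e = 0` holds
in `ℝ^{F^c}` (stated coordinatewise at each `ε ∉ F`). -/
theorem stmt13 (V E : Type*) [Fintype V] [Fintype E] [DecidableEq V] [DecidableEq E]
    (s t : E → V) (F : Set E)
    (χ : E → V → Bool)  -- for e ∈ F: χ e v = true ↔ v ∈ S₂, the component of t e in T ∖ e
    (hχs : ∀ e ∈ F, χ e (s e) = false)
    (hχt : ∀ e ∈ F, χ e (t e) = true)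
    (hnocross : ∀ e ∈ F, ∀ e' ∈ F, e' ≠ e → χ e (s e') = χ e (t e'))
    (z : E → E → ℤ)  -- z ε = the tree path from t ε to s ε, for cotree ε
    (hzsupp : ∀ ε ∉ F, ∀ x ∉ F, z ε x = 0)
    (hzbd : ∀ ε ∉ F, ∀ v : V,
      (∑ x, if t x = v then z ε x else 0) - (∑ x, if s x = v then z ε x else 0)
        = (if s ε = v then 1 else 0) - (if t ε = v then 1 else 0))
    (u : E → E → ℤ)  -- u x ε = the ε-coordinate of u_x in ℝ^{F^c}
    (hu_tree : ∀ e ∈ F, ∀ ε ∉ F,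
      u e ε = (if χ e (s ε) = true ∧ χ e (t ε) = false then 1 else 0)
            - (if χ e (s ε) = false ∧ χ e (t ε) = true then 1 else 0))
    (hu_cotree : ∀ ε' ∉ F, ∀ ε ∉ F, u ε' ε = if ε' = ε then 1 else 0) :
    ∀ v : V, ∀ ε ∉ F,
      (∑ e, if s e = v then u e ε else 0) - (∑ e, if t e = v then u e ε else 0) = 0 := by
  intro v ε hε
  -- Step 1: for tree edges e, z ε e equals the signed cut indicator
  have key : ∀ e ∈ F, z ε e =
      (if χ e (s ε) = true then (1:ℤ) else 0) - (if χ e (t ε) = true then 1 else 0) := by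
    intro e he
    have swap : ∀ g : E → V,
        (∑ w, (if χ e w = true then (1:ℤ) else 0) * (∑ x, if g x = w then z ε x else 0))
        = ∑ x, (if χ e (g x) = true then (1:ℤ) else 0) * z ε x := by
      intro g
      simp_rw [Finset.mul_sum, mul_ite, mul_zero]
      rw [Finset.sum_comm]
      refine Finset.sum_congr rfl fun x _ => ?_
      rw [Finset.sum_ite_eq]
      simp
    have h1 : ∑ w, (if χ e w = true then (1:ℤ) else 0) *
        ((∑ x, if t x = w then z ε x else 0) - (∑ x, if s x = w then z ε x else 0))
        = (if χ e (s ε) = true then 1 else 0) - (if χ e (t ε) = true then 1 else 0) := by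
      have step : ∀ w, (if χ e w = true then (1:ℤ) else 0) *
          ((∑ x, if t x = w then z ε x else 0) - (∑ x, if s x = w then z ε x else 0))
          = (if s ε = w then (if χ e w = true then (1:ℤ) else 0) else 0)
          - (if t ε = w then (if χ e w = true then (1:ℤ) else 0) else 0) := by
        intro w
        rw [hzbd ε hε w]
        split_ifs <;> ring
      rw [Finset.sum_congr rfl fun w _ => step w, Finset.sum_sub_distrib,
        Finset.sum_ite_eq, Finset.sum_ite_eq]
      simp
    have h2 : ∑ w, (if χ e w = true then (1:ℤ) else 0) *
        ((∑ x, if t x = w then z ε x else 0) - (∑ x, if s x = w then z ε x else 0))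
        = z ε e := by
      have expand : ∀ w, (if χ e w = true then (1:ℤ) else 0) *
          ((∑ x, if t x = w then z ε x else 0) - (∑ x, if s x = w then z ε x else 0))
          = (if χ e w = true then (1:ℤ) else 0) * (∑ x, if t x = w then z ε x else 0)
          - (if χ e w = true then (1:ℤ) else 0) * (∑ x, if s x = w then z ε x else 0) :=
        fun w => by ring
      rw [Finset.sum_congr rfl fun w _ => expand w, Finset.sum_sub_distrib,
        swap t, swap s, ← Finset.sum_sub_distrib]
      have term : ∀ x, (if χ e (t x) = true then (1:ℤ) else 0) * z ε x
          - (if χ e (s x) = true then (1:ℤ) else 0) * z ε x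
          = if x = e then z ε e else 0 := by
        intro x
        by_cases hx : x = e
        · subst hx; rw [hχs x he, hχt x he]; simp
        · by_cases hxF : x ∈ F
          · rw [hnocross e he x hxF hx]; simp [hx]
          · rw [hzsupp ε hε x hxF]; simp [hx]
      rw [Finset.sum_congr rfl fun x _ => term x, Finset.sum_ite_eq']
      simp
    linarith [h1, h2]
  -- Step 2: u x ε = z ε x + δ_{x ε}
  have hu : ∀ x, u x ε = z ε x + (if x = ε then 1 else 0) := by
    intro x
    by_cases hx : x ∈ F
    · have hne : x ≠ ε := fun h => hε (h ▸ hx)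
      rw [hu_tree x hx ε hε, key x hx, if_neg hne]
      cases hb : χ x (s ε) <;> cases hb' : χ x (t ε) <;> simp [hb, hb']
    · rw [hu_cotree x hx ε hε, hzsupp ε hε x hx, zero_add]
  -- Step 3: conclude
  have split : ∀ g : E → V, (∑ e, if g e = v then u e ε else 0)
      = (∑ e, if g e = v then z ε e else 0) + (if g ε = v then 1 else 0) := by
    intro g
    have : ∀ e, (if g e = v then u e ε else 0)
        = (if g e = v then z ε e else 0) + (if g e = v then (if e = ε then (1:ℤ) else 0) else 0) := by
      intro e; rw [hu e]; split_ifs <;> ring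
    rw [Finset.sum_congr rfl fun e _ => this e, Finset.sum_add_distrib]
    congr 1
    have : ∀ e, (if g e = v then (if e = ε then (1:ℤ) else 0) else 0)
        = if e = ε then (if g ε = v then (1:ℤ) else 0) else 0 := by
      intro e
      by_cases h : e = ε
      · subst h; simp
      · simp [h]
    rw [Finset.sum_congr rfl fun e _ => this e, Finset.sum_ite_eq']
    simp
  rw [split s, split t]
  have := hzbd ε hε v
  linarith [this]
end

section
/- Let G = (V,E) be a finite connected graph with spanning tree T = (V,F) and fixed edge orientations, and for e ∈ F let u_e ∈ ℝ^{F^c} be defined by the tree-cut formula u_e = Σ_{ε∈F^c: s(ε)∈S_2, t(ε)∈S_1} u_ε − Σ_{ε∈F^c: s(ε)∈S_1, t(ε)∈S_2} u_ε. Then for each ε_0 ∈ F^c, the fundamental cycle γ_{ε_0} of ε_0, expressed as ℓ(ε_0)u_{ε_0} + Σ_{e ∈ γ_T(ε_0)∩F} (±ℓ(e)) u_e in the basis {u_ε}_{ε∈F^c}, has ε-coordinate Q_Γ(γ_{ε_0}, γ_ε) for every ε ∈ F^c, where Q_Γ(γ, γ') = Σ_{e∈E} ℓ(e)·γ_e·γ'_e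 is the length pairing of cycles. -/
/-- Setup as in the tree-cut construction: `G = (V,E)` finite
connected, spanning tree `T = (V,F)`, edge lengths `ℓ > 0`, and for `e ∈ F` the
cut indicator `χ e` of the component `S₂ ∋ t(e)` of `T∖e`.  For each cotree edge
`ε ∉ F`, `γ ε ∈ ℤ^E` is the fundamental cycle (supported on `F ∪ {ε}`, a cycle for
the boundary map, traversing `ε` positively), and `u_e ∈ ℤ^{F^c}` is defined by the
tree-cut formula (`u x ε` is the ε-coordinate of `u_x`).  Then the cycle `γ_{ε₀}`,
expanded as `∑_e ℓ(e) γ_{ε₀}(e) u_e`, has `ε`-coordinate equal to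
`Q_Γ(γ_{ε₀}, γ_ε) = ∑_e ℓ(e) γ_{ε₀}(e) γ_ε(e)`; i.e. `γ_{ε₀} = ∑_ε Q_Γ(γ_{ε₀},γ_ε) u_ε`,
so `{u_ε}` is the `Q_Γ`-dual basis to the fundamental cycle basis. -/
theorem stmt14 (V E : Type*) [Fintype V] [Fintype E] [DecidableEq V] [DecidableEq E]
    (s t : E → V) (F : Set E)
    (ℓ : E → ℝ) (hℓ : ∀ e, 0 < ℓ e)
    (χ : E → V → Bool)  -- for e ∈ F: χ e v = true ↔ v ∈ S₂, the component of t e in T ∖ e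
    (hχs : ∀ e ∈ F, χ e (s e) = false)
    (hχt : ∀ e ∈ F, χ e (t e) = true)
    (hnocross : ∀ e ∈ F, ∀ e' ∈ F, e' ≠ e → χ e (s e') = χ e (t e'))
    (γ : E → E → ℤ)  -- γ ε = the fundamental cycle of the cotree edge ε
    (hγsupp : ∀ ε ∉ F, ∀ x ∉ F, x ≠ ε → γ ε x = 0)
    (hγunit : ∀ ε ∉ F, γ ε ε = 1)
    (hγcyc : ∀ ε ∉ F, ∀ v : V,
      (∑ x, if t x = v then γ ε x else 0) - (∑ x, if s x = v then γ ε x else 0) = 0)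
    (u : E → E → ℤ)  -- u x ε = the ε-coordinate of u_x in ℝ^{F^c}
    (hu_tree : ∀ e ∈ F, ∀ ε ∉ F,
      u e ε = (if χ e (s ε) = true ∧ χ e (t ε) = false then 1 else 0)
            - (if χ e (s ε) = false ∧ χ e (t ε) = true then 1 else 0))
    (hu_cotree : ∀ ε' ∉ F, ∀ ε ∉ F, u ε' ε = if ε' = ε then 1 else 0) :
    ∀ ε₀ ∉ F, ∀ ε ∉ F,
      (∑ e, ℓ e * (γ ε₀ e : ℝ) * (u e ε : ℝ)) = ∑ e, ℓ e * (γ ε₀ e : ℝ) * (γ ε e : ℝ) := by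
  intro ε₀ hε₀ ε hε
  have key : ∀ e, u e ε = γ ε e := by
    intro e
    by_cases heF : e ∈ F
    · -- sum the cycle condition over the cut S₂
      have heε : e ≠ ε := fun h => hε (h ▸ heF)
      have H : (∑ x, ((if χ e (t x) = true then γ ε x else 0)
          - (if χ e (s x) = true then γ ε x else 0))) = 0 := by
        have h1 : ∀ g : E → V, (∑ x, if χ e (g x) = true then γ ε x else 0)
            = ∑ v, if χ e v = true then (∑ x, if g x = v then γ ε x else 0) else 0 := by
          intro g
          symm
          calc (∑ v, if χ e v = true then (∑ x, if g x = v then γ ε x else 0) else 0)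
              = ∑ v, ∑ x, if g x = v then (if χ e v = true then γ ε x else 0) else 0 := by
                refine Finset.sum_congr rfl fun v _ => ?_
                split <;> simp
            _ = ∑ x, ∑ v, if g x = v then (if χ e v = true then γ ε x else 0) else 0 :=
                Finset.sum_comm
            _ = ∑ x, if χ e (g x) = true then γ ε x else 0 := by
                refine Finset.sum_congr rfl fun x _ => ?_
                simp [Finset.sum_ite_eq]
        rw [Finset.sum_sub_distrib, h1 t, h1 s, ← Finset.sum_sub_distrib]
        refine Finset.sum_eq_zero fun v _ => ?_
        split
        · rw [hγcyc ε hε v]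
        · ring
      have Hsplit : (∑ x, ((if χ e (t x) = true then γ ε x else 0)
          - (if χ e (s x) = true then γ ε x else 0)))
          = γ ε e + ((if χ e (t ε) = true then (1:ℤ) else 0)
              - (if χ e (s ε) = true then 1 else 0)) := by
        rw [← Finset.sum_subset (Finset.subset_univ ({e, ε} : Finset E))
          (fun x _ hx => ?_), Finset.sum_pair heε]
        · rw [hχt e heF, hχs e heF, hγunit ε hε]; simp
        · obtain ⟨hx1, hx2⟩ : x ≠ e ∧ x ≠ ε := by
            simpa [not_or] using hx
          by_cases hxF : x ∈ F
          · rw [hnocross e heF x hxF hx1]; ring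
          · rw [hγsupp ε hε x hxF hx2]; simp
      rw [Hsplit] at H
      rw [hu_tree e heF ε hε]
      rcases Bool.eq_false_or_eq_true (χ e (s ε)) with hs1 | hs1 <;>
        rcases Bool.eq_false_or_eq_true (χ e (t ε)) with ht1 | ht1 <;>
        simp [hs1, ht1] at H ⊢ <;> omega
    · rw [hu_cotree e heF ε hε]
      by_cases h : e = ε
      · rw [h, hγunit ε hε]; simp [h]
      · rw [hγsupp ε hε e heF h]; simp [h]
  exact Finset.sum_congr rfl fun e _ => by rw [key e]
end
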